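/- Let T_s > 0, Δ > 0, e_∞ > 0, a_l > 0, b_l > 0 and e₀ ∈ ℝ satisfy e₀ - Δ + e_∞ > 0. Set c_{3l} = 2/(exp(2b_l) - 1), and define K_{3l} : [0,∞) → ℝ by K_{3l}(t) = ((e₀ - Δ + e_∞)/c_{3l})·(coth(a_l·t/(T_s - t) + b_l) - 1) - e_∞ for t ∈ [0, T_s), and K_{3l}(t) = -e_∞ for t ≥ T_s. Then: (i) c_{3l} = coth(b_l) - 1, and consequently K_{3l}(0) = e₀ - Δ; (ii) K_{3l} is strictly decreasing on [0, T_s]; (iii) K_{3l}(t) → -e_∞ as t → T_s from the left, so K_{3l} is continuous on [0,∞) (properties of the novel performance function (27)). -/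

import Mathlib

/-!
On `[0, T_s)` the function `K` is an affine image, with positive slope, of
`x ↦ coth x - 1 = 2 / (exp (2x) - 1)` evaluated at the time change
`t ↦ a_l t / (T_s - t) + b_l`.
That function of `x` is positive, continuous and strictly decreasing on `(0, ∞)` and tends to
`0` at infinity, while the time change increases strictly from `b_l` to `+∞` on `[0, T_s)`.
Dividing by `c_{3l} = coth b_l - 1` normalises `K 0` to `e₀ - Δ`, and the vanishing limit lets
`K` join the constant `-e_∞` continuously and strictly below its earlier values at `T_s`.
-/

open Real Filter Set Topology

noncomputable def cothSubOne (x : ℝ) : ℝ := 2 / (exp (2 * x) - 1)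

lemma exp_two_mul_sub_one_pos {x : ℝ} (hx : 0 < x) : 0 < exp (2 * x) - 1 :=
  sub_pos.2 (one_lt_exp_iff.2 (by positivity))

lemma cosh_div_sinh_sub_one {x : ℝ} (hx : x ≠ 0) :
    cosh x / sinh x - 1 = cothSubOne x := by
  have hexp : exp x ^ 2 - 1 ≠ 0 := by
    rw [sq, ← exp_add, sub_ne_zero, Ne, exp_eq_one_iff]
    contrapose! hx
    linarith
  rw [cothSubOne, two_mul, exp_add]
  rw [cosh_eq, sinh_eq, exp_neg] at *
  field_simp
  ring

lemma cothSubOne_pos {x : ℝ} (hx : 0 < x) : 0 < cothSubOne x :=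
  div_pos two_pos (exp_two_mul_sub_one_pos hx)

lemma strictAntiOn_cothSubOne : StrictAntiOn cothSubOne (Ioi 0) := fun x hx y _ hxy =>
  div_lt_div_of_pos_left two_pos (exp_two_mul_sub_one_pos hx) (by gcongr)

lemma continuousOn_cothSubOne : ContinuousOn cothSubOne (Ioi 0) :=
  continuousOn_const.div (by fun_prop) fun _ hx => (exp_two_mul_sub_one_pos hx).ne'

lemma tendsto_cothSubOne_atTop : Tendsto cothSubOne atTop (𝓝 0) :=
  (tendsto_atTop_add_const_right _ _ <|
    tendsto_exp_atTop.comp (tendsto_id.const_mul_atTop two_pos)).const_div_atTop 2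

section TimeChange

variable {a b T : ℝ}

lemma strictMonoOn_mul_div_sub (ha : 0 < a) (hT : 0 < T) :
    StrictMonoOn (fun t => a * t / (T - t)) (Iio T) := by
  intro s hs t ht hst
  simp only [mem_Iio] at hs ht
  rw [div_lt_div_iff₀ (sub_pos.2 hs) (sub_pos.2 ht)]
  nlinarith [mul_pos ha hT]

lemma continuousOn_mul_div_sub : ContinuousOn (fun t => a * t / (T - t)) (Iio T) :=
  (continuousOn_const.mul continuousOn_id).div (by fun_prop)
    fun _ ht => (sub_pos.2 (mem_Iio.1 ht)).ne'

lemma tendsto_mul_div_sub_nhdsLT (ha : 0 < a) (hT : 0 < T) :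
    Tendsto (fun t => a * t / (T - t)) (𝓝[<] T) atTop := by
  have hden : Tendsto (fun t => T - t) (𝓝[<] T) (𝓝[>] 0) := by
    refine tendsto_nhdsWithin_iff.2 ⟨?_, ?_⟩
    · have : Tendsto (fun t => T - t) (𝓝 T) (𝓝 (T - T)) := tendsto_const_nhds.sub tendsto_id
      simpa using this.mono_left nhdsWithin_le_nhds
    · filter_upwards [self_mem_nhdsWithin] with _ ht using sub_pos.2 (mem_Iio.1 ht)
  have hnum : Tendsto (fun t => a * t) (𝓝[<] T) (𝓝 (a * T)) :=
    (continuous_const.mul continuous_id).continuousAt.continuousWithinAt.tendsto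
  simpa only [div_eq_mul_inv, Function.comp_def] using
    hnum.pos_mul_atTop (mul_pos ha hT) (tendsto_inv_nhdsGT_zero.comp hden)

lemma mapsTo_mul_div_sub_add (ha : 0 ≤ a) (hb : 0 < b) :
    MapsTo (fun t => a * t / (T - t) + b) (Ico 0 T) (Ioi 0) := fun _ ht =>
  add_pos_of_nonneg_of_pos (div_nonneg (mul_nonneg ha ht.1) (sub_nonneg.2 ht.2.le)) hb

lemma strictAntiOn_cothSubOne_comp (ha : 0 < a) (hT : 0 < T) (hb : 0 < b) :
    StrictAntiOn (fun t => cothSubOne (a * t / (T - t) + b)) (Ico 0 T) :=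
  strictAntiOn_cothSubOne.comp_strictMonoOn
    (((strictMonoOn_mul_div_sub ha hT).mono Ico_subset_Iio_self).add_const b)
    (mapsTo_mul_div_sub_add ha.le hb)

lemma continuousOn_cothSubOne_comp (ha : 0 ≤ a) (hb : 0 < b) :
    ContinuousOn (fun t => cothSubOne (a * t / (T - t) + b)) (Ico 0 T) :=
  continuousOn_cothSubOne.comp
    ((continuousOn_mul_div_sub.mono Ico_subset_Iio_self).add continuousOn_const)
    (mapsTo_mul_div_sub_add ha hb)

lemma tendsto_cothSubOne_comp (ha : 0 < a) (hT : 0 < T) :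
    Tendsto (fun t => cothSubOne (a * t / (T - t) + b)) (𝓝[<] T) (𝓝 0) :=
  tendsto_cothSubOne_atTop.comp
    (tendsto_atTop_add_const_right _ b (tendsto_mul_div_sub_nhdsLT ha hT))

end TimeChange

section Gluing

variable {α β : Type*} [LinearOrder α] {a b : α} {f : α → β}

lemma StrictAntiOn.Icc_of_Ico [Preorder β] (hf : StrictAntiOn f (Ico a b))
    (hb : ∀ x ∈ Ico a b, f b < f x) : StrictAntiOn f (Icc a b) := by
  intro x hx y hy hxy
  rcases hy.2.eq_or_lt with rfl | hyb
  · exact hb x ⟨hx.1, hxy⟩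
  · exact hf ⟨hx.1, hxy.trans hyb⟩ ⟨hy.1, hyb⟩ hxy

variable [TopologicalSpace α] [OrderTopology α] [TopologicalSpace β]

lemma ContinuousOn.Ici_of_Ico_of_eq_Ici {y : β} (hf : ContinuousOn f (Ico a b))
    (hlim : Tendsto f (𝓝[<] b) (𝓝 y)) (hb : ∀ t, b ≤ t → f t = y) :
    ContinuousOn f (Ici a) := by
  intro x hx
  rcases lt_or_ge x b with hxb | hbx
  · refine (hf x ⟨hx, hxb⟩).mono_of_mem_nhdsWithin ?_
    rw [← Ici_inter_Iio]
    exact inter_mem_nhdsWithin _ (Iio_mem_nhds hxb)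
  refine ContinuousAt.continuousWithinAt ?_
  rcases hbx.eq_or_lt with rfl | hbx
  · have hright : Tendsto f (𝓝[≥] b) (𝓝 y) :=
      tendsto_const_nhds.congr' <| eventually_nhdsWithin_of_forall fun t ht => (hb t ht).symm
    rw [ContinuousAt, ← nhdsLT_sup_nhdsGE, tendsto_sup, hb b le_rfl]
    exact ⟨hlim, hright⟩
  · rw [ContinuousAt, hb x hbx.le]
    exact tendsto_const_nhds.congr' <|
      (eventually_gt_nhds hbx).mono fun t ht => (hb t ht.le).symm

end Gluing

theorem performance_function_coth_properties_general
    (Ts Δ einf al bl e₀ : ℝ)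
    (hTs : 0 < Ts)
    (hal : 0 < al) (hbl : 0 < bl)
    (he₀ : 0 < e₀ - Δ + einf)
    (c3l : ℝ)
    (hc3l : c3l = 2 / (Real.exp (2 * bl) - 1))
    (K : ℝ → ℝ)
    (hK₁ : ∀ t, 0 ≤ t → t < Ts →
      K t = ((e₀ - Δ + einf) / c3l) *
              (Real.cosh (al * t / (Ts - t) + bl) /
                Real.sinh (al * t / (Ts - t) + bl) - 1) - einf)
    (hK₂ : ∀ t, Ts ≤ t → K t = -einf) :
    c3l = Real.cosh bl / Real.sinh bl - 1 ∧
    K 0 = e₀ - Δ ∧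
    StrictAntiOn K (Set.Icc 0 Ts) ∧
    Tendsto K (nhdsWithin Ts (Set.Iio Ts)) (nhds (-einf)) ∧
    ContinuousOn K (Set.Ici 0) := by
  set φ := fun t => cothSubOne (al * t / (Ts - t) + bl)
  set C := (e₀ - Δ + einf) / c3l
  have hc : c3l = cothSubOne bl := hc3l
  have hc_pos : 0 < c3l := hc ▸ cothSubOne_pos hbl
  have hC : 0 < C := div_pos he₀ hc_pos
  have hK : EqOn K (fun t => C * φ t - einf) (Ico 0 Ts) := fun t ht => by
    rw [hK₁ t ht.1 ht.2, cosh_div_sinh_sub_one (mapsTo_mul_div_sub_add hal.le hbl ht).ne']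
  have hlim : Tendsto K (𝓝[<] Ts) (𝓝 (-einf)) := by
    have := ((tendsto_cothSubOne_comp (b := bl) hal hTs).const_mul C).sub_const einf
    rw [mul_zero, zero_sub] at this
    exact this.congr' (eventuallyEq_of_mem (Ico_mem_nhdsLT hTs) hK).symm
  refine ⟨hc.trans (cosh_div_sinh_sub_one hbl.ne').symm, ?_, ?_, hlim, ?_⟩
  · rw [hK ⟨le_rfl, hTs⟩]
    simp only [φ, mul_zero, zero_div, zero_add, ← hc, C, div_mul_cancel₀ _ hc_pos.ne']
    ring
  · refine StrictAntiOn.Icc_of_Ico (fun s hs t ht hst => ?_) fun t ht => ?_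
    · rw [hK hs, hK ht]
      exact sub_lt_sub_right
        (mul_lt_mul_of_pos_left (strictAntiOn_cothSubOne_comp hal hTs hbl hs ht hst) hC) _
    · rw [hK ht, hK₂ Ts le_rfl, neg_lt_sub_iff_lt_add, lt_add_iff_pos_right]
      exact mul_pos hC (cothSubOne_pos (mapsTo_mul_div_sub_add hal.le hbl ht))
  · refine ContinuousOn.Ici_of_Ico_of_eq_Ici (ContinuousOn.congr ?_ hK) hlim hK₂
    exact (continuousOn_const.mul (continuousOn_cothSubOne_comp hal.le hbl)).sub continuousOn_const

/-- Properties of the novel performance function (27), built from the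
hyperbolic cotangent `coth x = cosh x / sinh x`. -/
theorem performance_function_coth_properties
    (Ts Δ einf al bl e₀ : ℝ)
    (hTs : 0 < Ts) (hΔ : 0 < Δ) (heinf : 0 < einf)
    (hal : 0 < al) (hbl : 0 < bl)
    (he₀ : 0 < e₀ - Δ + einf)
    (c3l : ℝ)
    (hc3l : c3l = 2 / (Real.exp (2 * bl) - 1))
    (K : ℝ → ℝ)
    (hK₁ : ∀ t, 0 ≤ t → t < Ts →
      K t = ((e₀ - Δ + einf) / c3l) *
              (Real.cosh (al * t / (Ts - t) + bl) /
                Real.sinh (al * t / (Ts - t) + bl) - 1) - einf)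
    (hK₂ : ∀ t, Ts ≤ t → K t = -einf) :
    c3l = Real.cosh bl / Real.sinh bl - 1 ∧
    K 0 = e₀ - Δ ∧
    StrictAntiOn K (Set.Icc 0 Ts) ∧
    Tendsto K (nhdsWithin Ts (Set.Iio Ts)) (nhds (-einf)) ∧
    ContinuousOn K (Set.Ici 0) :=
  performance_function_coth_properties_general Ts Δ einf al bl e₀ hTs hal hbl he₀ c3l hc3l K hK₁ hK₂
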